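/- arXiv:1708.01907 — 5 statements merged into one kernel-verified Lean document; each statement's English description precedes it below -/
import Mathlib

section
/- Let A be a real b×a matrix and B a real b×c matrix with Aᵀ·B = 0, and let Δ = A·Aᵀ + B·Bᵀ : ℝ^b → ℝ^b. Then ℝ^b decomposes as the internal direct sum ℝ^b = ker Δ ⊕ range A ⊕ range B, and the three subspaces ker Δ, range A, and range B are pairwise orthogonal with respect to the standard inner product on ℝ^b. -/
/-!
Read `A` and `B` as operators `S`, `T` between Euclidean spaces, so that `Aᵀ` is the adjoint `S†`.
Since `⟪Δx, x⟫ = ‖S†x‖² + ‖T†x‖²`, the kernel of `Δ = SS† + TT†` is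
`ker S† ⊓ ker T† = (range S ⊔ range T)ᗮ`, while `S†T = 0` makes `range S ⟂ range T`. Two orthogonal
subspaces together with the orthogonal complement of their sum split the space into three mutually
orthogonal summands.
-/

open Matrix

theorem DirectSum.IsInternal.map_linearEquiv {ι R M N : Type*} [DecidableEq ι] [Ring R]
    [AddCommGroup M] [Module R M] [AddCommGroup N] [Module R N] {p : ι → Submodule R M}
    (h : DirectSum.IsInternal p) (e : M ≃ₗ[R] N) :
    DirectSum.IsInternal fun i => (p i).map (e : M →ₗ[R] N) := by
  rw [DirectSum.isInternal_submodule_iff_iSupIndep_and_iSup_eq_top] at h ⊢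
  exact ⟨h.1.map_orderIso (Submodule.orderIsoMapComap e),
    by rw [← Submodule.map_iSup, h.2, Submodule.map_top, LinearEquiv.range]⟩

section InnerProductSpace

variable {𝕜 E F G : Type*} [RCLike 𝕜]
  [NormedAddCommGroup E] [InnerProductSpace 𝕜 E] [FiniteDimensional 𝕜 E]
  [NormedAddCommGroup F] [InnerProductSpace 𝕜 F] [FiniteDimensional 𝕜 F]
  [NormedAddCommGroup G] [InnerProductSpace 𝕜 G]

open LinearMap Submodule

theorem Submodule.isInternal_orthogonal_sup {U V : Submodule 𝕜 E} (h : U ⟂ V) :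
    DirectSum.IsInternal ![(U ⊔ V)ᗮ, U, V] := by
  obtain ⟨hU, hV⟩ := isOrtho_sup_right.mp (isOrtho_orthogonal_left (U ⊔ V))
  have hfam : OrthogonalFamily 𝕜 (fun i => ↥(![(U ⊔ V)ᗮ, U, V] i))
      (fun i => (![(U ⊔ V)ᗮ, U, V] i).subtypeₗᵢ) := by
    rw [orthogonalFamily_iff_pairwise]
    intro i j hij
    fin_cases i <;> fin_cases j <;> simp_all [Function.onFun, h.symm, hU.symm, hV.symm]
  rw [hfam.isInternal_iff, iSup_fin_three]
  change ((U ⊔ V)ᗮ ⊔ U ⊔ V)ᗮ = ⊥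
  rw [sup_assoc, sup_comm, sup_orthogonal_of_hasOrthogonalProjection, top_orthogonal_eq_bot]

theorem LinearMap.ker_self_comp_adjoint_add_self_comp_adjoint [FiniteDimensional 𝕜 G]
    (S : F →ₗ[𝕜] E) (T : G →ₗ[𝕜] E) :
    ker (S ∘ₗ S.adjoint + T ∘ₗ T.adjoint) = (range S ⊔ range T)ᗮ := by
  rw [← inf_orthogonal, orthogonal_range, orthogonal_range]
  refine le_antisymm (fun x hx => ?_) (fun x ⟨hS, hT⟩ => by simp_all)
  have hnorm : ‖S.adjoint x‖ ^ 2 + ‖T.adjoint x‖ ^ 2 = 0 := by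
    have h := congrArg (inner 𝕜 x) (mem_ker.mp hx)
    rw [inner_zero_right, add_apply, inner_add_right, comp_apply, comp_apply,
      ← adjoint_inner_left S, ← adjoint_inner_left T, inner_self_eq_norm_sq_to_K,
      inner_self_eq_norm_sq_to_K] at h
    exact_mod_cast h
  obtain ⟨hS, hT⟩ := (add_eq_zero_iff_of_nonneg (sq_nonneg _) (sq_nonneg _)).mp hnorm
  exact ⟨by simpa using hS, by simpa using hT⟩

theorem LinearMap.isOrtho_range_of_adjoint_comp_eq_zero {S : F →ₗ[𝕜] E} {T : G →ₗ[𝕜] E}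
    (h : S.adjoint ∘ₗ T = 0) : range S ⟂ range T := by
  rintro _ ⟨x, rfl⟩ _ ⟨y, rfl⟩
  rw [← adjoint_inner_left, ← comp_apply, h, zero_apply, inner_zero_left]

end InnerProductSpace

namespace Matrix

variable {m n 𝕜 : Type*} [Fintype n] [DecidableEq n] [CommRing 𝕜] (p q : ENNReal)

theorem range_mulVecLin_eq_map_range_toLpLin (M : Matrix m n 𝕜) :
    LinearMap.range M.mulVecLin =
      (LinearMap.range (toLpLin p q M)).map (WithLp.linearEquiv q 𝕜 (m → 𝕜) : _ →ₗ[𝕜] _) := by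
  ext x
  simp only [LinearMap.mem_range, Submodule.mem_map_equiv]
  exact ⟨fun ⟨y, hy⟩ => ⟨WithLp.toLp p y, congrArg (WithLp.toLp q) hy⟩,
    fun ⟨y, hy⟩ => ⟨WithLp.ofLp y, congrArg WithLp.ofLp hy⟩⟩

theorem ker_mulVecLin_eq_map_ker_toLpLin (M : Matrix m n 𝕜) :
    LinearMap.ker M.mulVecLin =
      (LinearMap.ker (toLpLin p q M)).map (WithLp.linearEquiv p 𝕜 (n → 𝕜) : _ →ₗ[𝕜] _) := by
  ext x
  simp

theorem toEuclideanLin_transpose_eq_adjoint [Fintype m] [DecidableEq m] (M : Matrix m n ℝ) :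
    toEuclideanLin Mᵀ = (toEuclideanLin M).adjoint := by
  rw [← conjTranspose_eq_transpose_of_trivial, toEuclideanLin_conjTranspose_eq_adjoint]

theorem dotProduct_eq_zero_of_isOrtho [Fintype m] {U V : Submodule ℝ (EuclideanSpace ℝ m)}
    (h : U ⟂ V) {x y : m → ℝ} (hx : x ∈ U.map (WithLp.linearEquiv 2 ℝ (m → ℝ) : _ →ₗ[ℝ] _))
    (hy : y ∈ V.map (WithLp.linearEquiv 2 ℝ (m → ℝ) : _ →ₗ[ℝ] _)) : x ⬝ᵥ y = 0 := by
  rw [Submodule.mem_map_equiv] at hx hy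
  simpa [EuclideanSpace.inner_toLp_toLp, dotProduct_comm] using h.inner_eq hx hy

end Matrix

/-- For real matrices `A : b × a` and `B : b × c` with `Aᵀ · B = 0`
and `Δ = A·Aᵀ + B·Bᵀ`, the space `ℝ^b` is the internal direct sum
`ker Δ ⊕ range A ⊕ range B`, and the three subspaces are pairwise orthogonal
with respect to the standard inner product (dot product). -/
theorem hodge_decomposition (a b c : ℕ)
    (A : Matrix (Fin b) (Fin a) ℝ) (B : Matrix (Fin b) (Fin c) ℝ)
    (hAB : Aᵀ * B = 0) :
    DirectSum.IsInternal
      (![LinearMap.ker (A * Aᵀ + B * Bᵀ).mulVecLin,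
         LinearMap.range A.mulVecLin,
         LinearMap.range B.mulVecLin] : Fin 3 → Submodule ℝ (Fin b → ℝ)) ∧
    (∀ x ∈ LinearMap.ker (A * Aᵀ + B * Bᵀ).mulVecLin,
      ∀ y ∈ LinearMap.range A.mulVecLin, x ⬝ᵥ y = 0) ∧
    (∀ x ∈ LinearMap.ker (A * Aᵀ + B * Bᵀ).mulVecLin,
      ∀ y ∈ LinearMap.range B.mulVecLin, x ⬝ᵥ y = 0) ∧
    (∀ x ∈ LinearMap.range A.mulVecLin,
      ∀ y ∈ LinearMap.range B.mulVecLin, x ⬝ᵥ y = 0) := by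
  set S := toEuclideanLin A
  set T := toEuclideanLin B
  have hST : S.adjoint ∘ₗ T = 0 := by
    rw [← toEuclideanLin_transpose_eq_adjoint, ← toLpLin_mul_same, hAB, map_zero]
  have hΔ : toEuclideanLin (A * Aᵀ + B * Bᵀ) = S ∘ₗ S.adjoint + T ∘ₗ T.adjoint := by
    simp only [map_add, toLpLin_mul_same, toEuclideanLin_transpose_eq_adjoint, S, T]
  have hortho := LinearMap.isOrtho_range_of_adjoint_comp_eq_zero hST
  obtain ⟨hKS, hKT⟩ := Submodule.isOrtho_sup_right.mp (Submodule.isOrtho_orthogonal_left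
    (LinearMap.range S ⊔ LinearMap.range T))
  rw [ker_mulVecLin_eq_map_ker_toLpLin 2 2, hΔ,
    LinearMap.ker_self_comp_adjoint_add_self_comp_adjoint,
    range_mulVecLin_eq_map_range_toLpLin 2 2, range_mulVecLin_eq_map_range_toLpLin 2 2]
  refine ⟨?_, fun x hx y hy => dotProduct_eq_zero_of_isOrtho hKS hx hy,
    fun x hx y hy => dotProduct_eq_zero_of_isOrtho hKT hx hy,
    fun x hx y hy => dotProduct_eq_zero_of_isOrtho hortho hx hy⟩
  convert (Submodule.isInternal_orthogonal_sup hortho).map_linearEquiv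
    (WithLp.linearEquiv 2 ℝ (Fin b → ℝ)) using 1
  · rfl
  · ext i : 1
    fin_cases i <;> rfl
end

section
/- Let A be a real b×a matrix and B a real b×c matrix with Aᵀ·B = 0, and let Δ = A·Aᵀ + B·Bᵀ : ℝ^b → ℝ^b. Then the cycle space decomposes as the internal direct sum ker Aᵀ = ker Δ ⊕ range B, and the subspaces ker Δ and range B are orthogonal with respect to the standard inner product on ℝ^b. -/
/-!
Since `Δ = [A B] [A B]ᵀ`, a vector is harmonic iff it lies in `ker Aᵀ ∩ ker Bᵀ`. Over an ordered
field `ker Bᵀ` is a complement of `range B` (they meet trivially since `y ⬝ᵥ y = 0` forces `y = 0`,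
and their dimensions add up by rank–nullity and `rank Bᵀ = rank B`). As `range B ⊆ ker Aᵀ`, the
modular law then splits `ker Aᵀ` as `(ker Aᵀ ∩ ker Bᵀ) ⊕ range B`.
-/

open Matrix

namespace Matrix

variable {l m n p R : Type*} [Fintype m] [Fintype n] [Fintype p]

theorem dotProduct_eq_zero_of_mem_ker_transpose_of_mem_range [CommSemiring R]
    {B : Matrix m p R} {x y : m → R} (hx : x ∈ LinearMap.ker Bᵀ.mulVecLin)
    (hy : y ∈ LinearMap.range B.mulVecLin) : x ⬝ᵥ y = 0 := by
  obtain ⟨w, rfl⟩ := hy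
  rw [LinearMap.mem_ker, mulVecLin_apply] at hx
  rw [mulVecLin_apply, dotProduct_mulVec, ← mulVec_transpose, hx, zero_dotProduct]

theorem range_mulVecLin_le_ker_of_mul_eq_zero [CommSemiring R] {A : Matrix l m R}
    {B : Matrix m p R} (hAB : A * B = 0) :
    LinearMap.range B.mulVecLin ≤ LinearMap.ker A.mulVecLin :=
  LinearMap.range_le_ker_iff.mpr (by rw [← mulVecLin_mul, hAB, mulVecLin_zero])

variable [Field R] [LinearOrder R] [IsStrictOrderedRing R]

theorem ker_mulVecLin_mul_transpose_add_mul_transpose (A : Matrix m n R) (B : Matrix m p R) :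
    LinearMap.ker (A * Aᵀ + B * Bᵀ).mulVecLin =
      LinearMap.ker Aᵀ.mulVecLin ⊓ LinearMap.ker Bᵀ.mulVecLin := by
  have hgram : A * Aᵀ + B * Bᵀ = (fromCols A B)ᵀᵀ * (fromCols A B)ᵀ := by
    rw [transpose_transpose, transpose_fromCols, fromCols_mul_fromRows]
  ext x
  simp only [hgram, ker_mulVecLin_transpose_mul_self, transpose_fromCols, Submodule.mem_inf,
    LinearMap.mem_ker, mulVecLin_apply, fromRows_mulVec]
  rw [← Sum.elim_zero_zero, Sum.elim_eq_iff]

theorem disjoint_ker_transpose_range (B : Matrix m p R) :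
    Disjoint (LinearMap.ker Bᵀ.mulVecLin) (LinearMap.range B.mulVecLin) :=
  Submodule.disjoint_def.mpr fun _ hx hx' =>
    dotProduct_self_eq_zero.mp (dotProduct_eq_zero_of_mem_ker_transpose_of_mem_range hx hx')

theorem ker_transpose_sup_range (B : Matrix m p R) :
    LinearMap.ker Bᵀ.mulVecLin ⊔ LinearMap.range B.mulVecLin = ⊤ := by
  refine Submodule.eq_top_of_disjoint _ _ (le_of_eq ?_) (disjoint_ker_transpose_range B)
  rw [← LinearMap.finrank_range_add_finrank_ker Bᵀ.mulVecLin, add_comm]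
  exact congrArg _ B.rank_transpose

end Matrix

/-- For real matrices `A : b × a` and `B : b × c` with `Aᵀ · B = 0`
and `Δ = A·Aᵀ + B·Bᵀ`, the cycle space decomposes as the internal direct sum
`ker Aᵀ = ker Δ ⊕ range B`, the two summands being orthogonal for the standard
inner product on `ℝ^b`. -/
theorem cycle_space_decomposition (a b c : ℕ)
    (A : Matrix (Fin b) (Fin a) ℝ) (B : Matrix (Fin b) (Fin c) ℝ)
    (hAB : Aᵀ * B = 0) :
    Disjoint (LinearMap.ker (A * Aᵀ + B * Bᵀ).mulVecLin)
        (LinearMap.range B.mulVecLin) ∧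
    LinearMap.ker (A * Aᵀ + B * Bᵀ).mulVecLin ⊔ LinearMap.range B.mulVecLin =
      LinearMap.ker (Aᵀ).mulVecLin ∧
    (∀ x ∈ LinearMap.ker (A * Aᵀ + B * Bᵀ).mulVecLin,
      ∀ y ∈ LinearMap.range B.mulVecLin, x ⬝ᵥ y = 0) := by
  rw [ker_mulVecLin_mul_transpose_add_mul_transpose]
  refine ⟨(disjoint_ker_transpose_range B).mono_left inf_le_right, ?_,
    fun x hx _ hy => dotProduct_eq_zero_of_mem_ker_transpose_of_mem_range hx.2 hy⟩
  rw [inf_sup_assoc_of_le _ (range_mulVecLin_le_ker_of_mul_eq_zero hAB),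
    ker_transpose_sup_range, inf_top_eq]
end

section
/- (Deletion and the winding difference.) Let m ≥ 2 and let M be an m×(m−1) integer matrix with ℤ-linearly independent columns whose last row is nonzero; let n be the gcd of the entries of the last row of M. Then there exist an (m−1)×(m−2) integer matrix M_d with ℤ-linearly independent columns and ε ∈ {1, −1} such that for every z ∈ ℤ^m whose last coordinate is 0, det(z | M) = ε · n · det(z' | M_d), where z' ∈ ℤ^{m−1} is z with its last coordinate removed, and det(x | N) denotes the determinant of the square matrix whose first column is x and whose remaining columns are those of N. -/
open Matrix

/-- The `m×m` integer matrix whose first column is `z` and whose remaining columns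
are the columns of the `m×(m−1)` matrix `M` (here `m = k + 1`). -/
def colAugment {k : ℕ} (z : Fin (k + 1) → ℤ) (M : Matrix (Fin (k + 1)) (Fin k) ℤ) :
    Matrix (Fin (k + 1)) (Fin (k + 1)) ℤ :=
  (Matrix.of (Fin.cons (α := fun _ => Fin (k + 1) → ℤ) z fun j => fun i => M i j))ᵀ

/-!
Column operations by a unimodular `U` (Bezout on two columns at a time) turn the last row of `M`
into `(0, …, 0, g)`, `g` its gcd. They multiply `det (z | M)` by the unit `det U` and keep the
columns independent. For `z` with last coordinate `0` the last row of `(z | M U)` is then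
`(0, …, 0, g)`, so expanding along it gives `g • det (z' | M_d)` with `M_d` the top left block
of `M U`, whose columns stay independent because they are the columns of `M U` with a zero
entry removed.
-/

namespace Matrix

variable {R ι κ τ : Type*} [CommRing R] [Fintype ι] [Fintype κ] [Fintype τ]

theorem det_reindex_fromBlocks_zero_zero [DecidableEq ι] [DecidableEq κ] [DecidableEq τ]
    (e : ι ⊕ κ ≃ τ) (A : Matrix ι ι R) (D : Matrix κ κ R) :
    (reindex e e (fromBlocks A 0 0 D)).det = A.det * D.det := by
  rw [det_reindex_self, det_fromBlocks_zero₂₁]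

theorem vecMul_reindex_fromBlocks_zero_zero_comp (e : ι ⊕ κ ≃ τ) (A : Matrix ι ι R)
    (D : Matrix κ κ R) (x : τ → R) :
    (x ᵥ* reindex e e (fromBlocks A 0 0 D)) ∘ e =
      Sum.elim ((x ∘ e ∘ Sum.inl) ᵥ* A) ((x ∘ e ∘ Sum.inr) ᵥ* D) := by
  rw [reindex_apply, submatrix_vecMul_equiv, Equiv.symm_symm, Function.comp_assoc,
    Equiv.symm_comp_self, Function.comp_id, vecMul_fromBlocks]
  simp [Function.comp_def]

theorem det_eq_mul_det_submatrix_castSucc {k : ℕ}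
    (A : Matrix (Fin (k + 1)) (Fin (k + 1)) R) (h : ∀ j, A (Fin.last k) (Fin.castSucc j) = 0) :
    A.det = A (Fin.last k) (Fin.last k) * (A.submatrix Fin.castSucc Fin.castSucc).det := by
  rw [det_succ_row A (Fin.last k), Fin.sum_univ_castSucc]
  simp [h, Fin.succAbove_last, ← two_mul, pow_mul]

end Matrix

theorem Fin.gcd_univ_castSucc {α : Type*} [CommMonoidWithZero α] [NormalizedGCDMonoid α]
    {k : ℕ} (v : Fin (k + 1) → α) :
    Finset.univ.gcd v = gcd (Finset.univ.gcd (v ∘ Fin.castSucc)) (v (Fin.last k)) := by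
  rw [Fin.univ_castSuccEmb, Finset.gcd_cons, Finset.map_eq_image, Finset.gcd_image, gcd_comm]
  rfl

theorem exists_det_eq_one_vecMul_eq_gcd (a b : ℤ) :
    ∃ B : Matrix (Fin 2) (Fin 2) ℤ, B.det = 1 ∧ ![a, b] ᵥ* B = ![0, gcd a b] := by
  obtain hd | hd := eq_or_ne (gcd a b) 0
  · obtain ⟨rfl, rfl⟩ := (gcd_eq_zero_iff a b).mp hd
    exact ⟨1, det_one, by simp⟩
  obtain ⟨a', ha⟩ := gcd_dvd_left a b
  obtain ⟨b', hb⟩ := gcd_dvd_right a b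
  have hbez : a * Int.gcdA a b + b * Int.gcdB a b = gcd a b := by
    rw [← Int.coe_gcd, Int.gcd_eq_gcd_ab]
  refine ⟨!![b', Int.gcdA a b; -a', Int.gcdB a b], ?_, ?_⟩
  · rw [det_fin_two_of]
    refine mul_left_cancel₀ hd ?_
    linear_combination (Int.gcdB a b) * hb.symm + Int.gcdA a b * ha.symm + hbez
  · ext i
    fin_cases i
    · simp [vecMul, dotProduct]
      linear_combination b' * ha - a' * hb
    · simpa [vecMul, dotProduct] using hbez

theorem exists_isUnit_det_vecMul_eq_single_gcd (k : ℕ) (v : Fin (k + 1) → ℤ) :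
    ∃ U : Matrix (Fin (k + 1)) (Fin (k + 1)) ℤ, IsUnit U.det ∧
      v ᵥ* U = Pi.single (Fin.last k) (Finset.univ.gcd v) := by
  induction k with
  | zero =>
    refine ⟨of fun _ _ => (normUnit (v 0) : ℤ), by simp [det_unique], ?_⟩
    ext i
    fin_cases i
    simp [vecMul, dotProduct, normalize_apply]
  | succ k ih =>
    set b := Finset.univ.gcd (v ∘ Fin.castSucc)
    set c := v (Fin.last (k + 1))
    obtain ⟨U, hU, hvU⟩ := ih (v ∘ Fin.castSucc)
    obtain ⟨B, hB, hbB⟩ := exists_det_eq_one_vecMul_eq_gcd b c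
    let e₁ : Fin (k + 1) ⊕ Fin 1 ≃ Fin (k + 2) := finSumFinEquiv
    let e₂ : Fin k ⊕ Fin 2 ≃ Fin (k + 2) := finSumFinEquiv
    -- `P` acts by `U` on the first `k + 1` coordinates, making `v` into `(0, …, 0, b, c)`,
    -- and `Q` acts by `B` on the last two.
    set P := reindex e₁ e₁ (fromBlocks U 0 0 1)
    set Q := reindex e₂ e₂ (fromBlocks 1 0 0 B)
    refine ⟨P * Q, by simpa [P, Q, det_reindex_fromBlocks_zero_zero, hB] using hU, ?_⟩
    have hP₁ : (v ᵥ* P) ∘ e₁ = Sum.elim (Pi.single (Fin.last k) b) ![c] := by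
      rw [vecMul_reindex_fromBlocks_zero_zero_comp, vecMul_one]
      exact congrArg₂ Sum.elim hvU (funext fun i => by fin_cases i; rfl)
    have hP₂ : (v ᵥ* P) ∘ e₂ = Sum.elim (0 : Fin k → ℤ) ![b, c] := by
      ext (i | i)
      · exact (congrFun hP₁ (Sum.inl i.castSucc)).trans (by simp)
      · fin_cases i
        · exact (congrFun hP₁ (Sum.inl (Fin.last k))).trans (by simp)
        · exact congrFun hP₁ (Sum.inr 0)
    rw [← vecMul_vecMul]
    refine e₂.surjective.injective_comp_right ?_
    beta_reduce
    rw [vecMul_reindex_fromBlocks_zero_zero_comp, ← Function.comp_assoc, ← Function.comp_assoc,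
      hP₂, Sum.elim_comp_inl, Sum.elim_comp_inr, zero_vecMul, hbB, Fin.gcd_univ_castSucc]
    ext (i | i)
    · simp [e₂, Pi.single_apply, Fin.ext_iff]
      omega
    · fin_cases i <;> simp [e₂, Pi.single_apply, Fin.ext_iff, b, c]

theorem LinearIndependent.col_submatrix_castSucc {R : Type*} [Semiring R] {m k : ℕ}
    {A : Matrix (Fin (m + 1)) (Fin (k + 1)) R} (hA : LinearIndependent R A.col)
    (h : ∀ j, A (Fin.last m) (Fin.castSucc j) = 0) :
    LinearIndependent R (A.submatrix Fin.castSucc Fin.castSucc).col := by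
  refine .of_comp (Function.ExtendByZero.linearMap R Fin.castSucc) ?_
  convert hA.comp _ (Fin.castSucc_injective _) using 1
  ext j i
  induction i using Fin.lastCases with
  | last =>
    change Function.extend Fin.castSucc _ 0 _ = _
    rw [Function.extend_apply' _ _ _ fun ⟨i, hi⟩ => Fin.castSucc_ne_last i hi]
    exact (h j).symm
  | cast i =>
    change Function.extend Fin.castSucc _ 0 _ = _
    rw [(Fin.castSucc_injective _).extend_apply]
    rfl

theorem LinearIndependent.col_mul_of_isUnit_det {R ι κ : Type*} [CommRing R] [Fintype ι]
    [Fintype κ] [DecidableEq κ] {A : Matrix ι κ R} (hA : LinearIndependent R A.col)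
    {U : Matrix κ κ R} (hU : IsUnit U.det) : LinearIndependent R (A * U).col := by
  rw [← mulVec_injective_iff] at hA ⊢
  have : (A * U).mulVec = A.mulVec ∘ U.mulVec := funext fun x => (mulVec_mulVec x A U).symm
  rw [this]
  exact hA.comp (mulVec_injective_of_isUnit ((isUnit_iff_isUnit_det U).mpr hU))

theorem det_colAugment_mul {k : ℕ} (z : Fin (k + 1) → ℤ)
    (M : Matrix (Fin (k + 1)) (Fin k) ℤ) (U : Matrix (Fin k) (Fin k) ℤ) :
    (colAugment z (M * U)).det = (colAugment z M).det * U.det := by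
  have hminor (N : Matrix (Fin (k + 1)) (Fin k) ℤ) (i : Fin (k + 1)) :
      (colAugment z N).submatrix i.succAbove Fin.succ = N.submatrix i.succAbove id := by
    ext; simp [colAugment]
  simp only [det_succ_column_zero, hminor, Finset.sum_mul]
  refine Finset.sum_congr rfl fun i _ => ?_
  rw [show (M * U).submatrix i.succAbove id = M.submatrix i.succAbove id * U from rfl, det_mul]
  simp only [colAugment, of_apply, transpose_apply, Fin.cons_zero]
  ring

theorem colAugment_submatrix_castSucc {k : ℕ} (z : Fin (k + 2) → ℤ)
    (M : Matrix (Fin (k + 2)) (Fin (k + 1)) ℤ) :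
    (colAugment z M).submatrix Fin.castSucc Fin.castSucc =
      colAugment (fun i => z i.castSucc) (M.submatrix Fin.castSucc Fin.castSucc) := by
  ext i j
  induction j using Fin.cases <;> simp [colAugment]

theorem deletion_winding_difference_general (n : ℕ)
    (M : Matrix (Fin (n + 2)) (Fin (n + 1)) ℤ)
    (hM : LinearIndependent ℤ (fun j : Fin (n + 1) => fun i => M i j)) :
    ∃ (Md : Matrix (Fin (n + 1)) (Fin n) ℤ) (ε : ℤ),
      LinearIndependent ℤ (fun j : Fin n => fun i => Md i j) ∧
      (ε = 1 ∨ ε = -1) ∧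
      ∀ z : Fin (n + 2) → ℤ, z (Fin.last (n + 1)) = 0 →
        (colAugment z M).det =
          ε * (Finset.univ.gcd fun j : Fin (n + 1) => M (Fin.last (n + 1)) j) *
            (colAugment (fun i => z i.castSucc) Md).det := by
  obtain ⟨U, hU, hlast⟩ := exists_isUnit_det_vecMul_eq_single_gcd n (M (Fin.last (n + 1)))
  replace hlast : (M * U) (Fin.last (n + 1)) = Pi.single (Fin.last n) _ := hlast
  have hlast_castSucc (j : Fin n) : (M * U) (Fin.last (n + 1)) j.castSucc = 0 := by
    simp [hlast, Fin.castSucc_ne_last]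
  refine ⟨(M * U).submatrix Fin.castSucc Fin.castSucc, U.det,
    (hM.col_mul_of_isUnit_det hU).col_submatrix_castSucc hlast_castSucc, Int.isUnit_iff.mp hU,
    fun z hz => ?_⟩
  have hlast_aug (j : Fin (n + 1)) : colAugment z (M * U) (Fin.last (n + 1)) j.castSucc = 0 := by
    induction j using Fin.cases with
    | zero => exact hz
    | succ j => simpa [colAugment] using hlast_castSucc j
  calc (colAugment z M).det = U.det * ((colAugment z M).det * U.det) := by
        rw [mul_left_comm, Int.isUnit_mul_self hU, mul_one]
    _ = _ := by
        rw [← det_colAugment_mul, Matrix.det_eq_mul_det_submatrix_castSucc _ hlast_aug,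
          colAugment_submatrix_castSucc]
        simp [colAugment, hlast, mul_assoc]

/-- **Deletion and the winding difference.** Let `M` be an
`m×(m−1)` integer matrix (`m = n + 2 ≥ 2`) with ℤ-linearly independent columns and
nonzero last row, and let `g` be the gcd of the entries of the last row. Then there
exist an `(m−1)×(m−2)` integer matrix `M_d` with ℤ-linearly independent columns and
a sign `ε ∈ {1, −1}` such that for every `z ∈ ℤ^m` with last coordinate `0`,
`det(z | M) = ε · g · det(z' | M_d)` where `z'` is `z` with its last coordinate
removed. -/
theorem deletion_winding_difference (n : ℕ)
    (M : Matrix (Fin (n + 2)) (Fin (n + 1)) ℤ)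
    (hM : LinearIndependent ℤ (fun j : Fin (n + 1) => fun i => M i j))
    (hrow : ∃ j, M (Fin.last (n + 1)) j ≠ 0) :
    ∃ (Md : Matrix (Fin (n + 1)) (Fin n) ℤ) (ε : ℤ),
      LinearIndependent ℤ (fun j : Fin n => fun i => Md i j) ∧
      (ε = 1 ∨ ε = -1) ∧
      ∀ z : Fin (n + 2) → ℤ, z (Fin.last (n + 1)) = 0 →
        (colAugment z M).det =
          ε * (Finset.univ.gcd fun j : Fin (n + 1) => M (Fin.last (n + 1)) j) *
            (colAugment (fun i => z i.castSucc) Md).det :=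
  deletion_winding_difference_general n M hM
end

section
/- Suppose the row of the unicyclizer ∂ indexed by some edge σ of G is the zero vector. Then λ_{−σ} = 0, where λ_{−σ} = Σ_{Y cycletree of G with σ ∉ E(Y)} w(z_Y)·z_Y is the part of the standard harmonic cycle coming from cycletrees not containing σ. -/
open Matrix

/-- Oriented incidence matrix of a simple graph on a linearly ordered vertex set:
the column at an edge `e` with endpoints `u < v` has entry `−1` at `u`, `+1` at `v`,
and `0` elsewhere. -/
def incMat {V : Type} [Fintype V] [LinearOrder V] (G : SimpleGraph V)
    [DecidableRel G.Adj] : Matrix V G.edgeSet ℤ :=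
  fun v e =>
    Sym2.lift ⟨fun a b =>
        (if v = a ⊔ b then (1 : ℤ) else 0) - (if v = a ⊓ b then (1 : ℤ) else 0),
      fun a b => by simp only [sup_comm, inf_comm]⟩ e.1

/-- The cycle space `Z₁(G) = ker ∂₁ ⊆ ℤ^E`. -/
def cycleSpace {V : Type} [Fintype V] [LinearOrder V] (G : SimpleGraph V)
    [DecidableRel G.Adj] : Submodule ℤ (G.edgeSet → ℤ) :=
  LinearMap.ker (incMat G).mulVecLin

/-- The winding number `w(z) = det([z]_β, [∂]_β)` of `z ∈ Z₁(G)` with respect to a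
unicyclizer `D` (whose columns lie in the cycle space) and a basis `β` of the
cycle space; junk value `0` off the cycle space. -/
noncomputable def winding {V : Type} [Fintype V] [LinearOrder V] (G : SimpleGraph V)
    [DecidableRel G.Adj] {n : ℕ} (β : Module.Basis (Fin (n + 1)) ℤ (cycleSpace G))
    (D : Matrix G.edgeSet (Fin n) ℤ) (hD : ∀ j, (fun e => D e j) ∈ cycleSpace G)
    (z : G.edgeSet → ℤ) : ℤ :=
  @dite ℤ (z ∈ cycleSpace G) (Classical.dec _)
    (fun hz =>
      (Matrix.of fun i j : Fin (n + 1) =>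
        β.repr (Fin.cons (α := fun _ => cycleSpace G) ⟨z, hz⟩
          (fun k => ⟨fun e => D e k, hD k⟩) j) i).det)
    (fun _ => 0)

/-- A cycletree of `G`: a connected spanning subgraph with exactly `|V|` edges. -/
def IsCycletree {V : Type} [Fintype V] (G Y : SimpleGraph V) : Prop :=
  Y ≤ G ∧ Y.Connected ∧ Y.edgeSet.ncard = Fintype.card V

/-- The standard harmonic cycle `λ = Σ_Y w(z_Y)·z_Y`, the sum over all cycletrees
`Y` of `G`, for a given choice `zY` of cycle vectors. -/
noncomputable def stdHarmonic {V : Type} [Fintype V] [LinearOrder V]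
    (G : SimpleGraph V) [DecidableRel G.Adj] {n : ℕ}
    (β : Module.Basis (Fin (n + 1)) ℤ (cycleSpace G))
    (D : Matrix G.edgeSet (Fin n) ℤ) (hD : ∀ j, (fun e => D e j) ∈ cycleSpace G)
    (zY : SimpleGraph V → (G.edgeSet → ℤ)) : G.edgeSet → ℤ :=
  ∑ᶠ Y ∈ {Y : SimpleGraph V | IsCycletree G Y}, winding G β D hD (zY Y) • zY Y

/-- The property that `zY` selects, for each cycletree `Y` of `G`, a cycle vector of
`Y`: a nonzero element of the cycle space with entries in `{−1, 0, 1}` supported on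
the edges of `Y`. -/
def IsCycleVectorChoice {V : Type} [Fintype V] [LinearOrder V] (G : SimpleGraph V)
    [DecidableRel G.Adj] (zY : SimpleGraph V → (G.edgeSet → ℤ)) : Prop :=
  ∀ Y : SimpleGraph V, IsCycletree G Y →
    zY Y ∈ cycleSpace G ∧ zY Y ≠ 0 ∧
    (∀ e, zY Y e = -1 ∨ zY Y e = 0 ∨ zY Y e = 1) ∧
    (∀ e : G.edgeSet, zY Y e ≠ 0 → (e : Sym2 V) ∈ Y.edgeSet)

/-- The tree number `k(G)`: the number of spanning trees of `G`. -/
noncomputable def treeNumber {V : Type} (G : SimpleGraph V) : ℕ :=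
  {T : SimpleGraph V | T ≤ G ∧ T.IsTree}.ncard

/-
For a cycletree `Y` avoiding `σ`, the cycle vector `z_Y` and all columns of `∂` vanish at `σ`,
so the `m` vectors whose determinant is `w(z_Y)` lie in the kernel of the functional `z ↦ z σ`
on `Z₁(G)`. This functional is nonzero: closing a path of the connected spanning subgraph `Y`
with the edge `σ` gives a cycle through `σ`. Vectors in the kernel of a nonzero functional have
zero determinant, so every term of `λ_{−σ}` vanishes.
-/

open SimpleGraph

theorem Module.Basis.det_eq_zero_of_forall_apply_eq_zero {R M ι : Type*} [CommRing R]
    [IsDomain R] [AddCommGroup M] [Module R M] [Fintype ι] [DecidableEq ι]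
    (b : Module.Basis ι R M) {f : M →ₗ[R] R} (hf : f ≠ 0) {v : ι → M}
    (hv : ∀ i, f (v i) = 0) : b.det v = 0 := by
  rw [b.det_apply, ← Matrix.exists_vecMul_eq_zero_iff]
  refine ⟨fun i => f (b i), fun h => hf (b.ext fun i => congrFun h i), funext fun j => ?_⟩
  conv_rhs => rw [Pi.zero_apply, ← hv j, ← b.sum_repr (v j)]
  simp only [vecMul, dotProduct, b.toMatrix_apply, map_sum, map_smul, smul_eq_mul, mul_comm]

section CycleSpace

variable {V : Type} [LinearOrder V] (G : SimpleGraph V)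

def signedEdge (a b : V) : G.edgeSet → ℤ :=
  fun e => if (e : Sym2 V) = s(a, b) then (if a ≤ b then 1 else -1) else 0

def walkFlow : {a b : V} → G.Walk a b → (G.edgeSet → ℤ)
  | _, _, .nil => 0
  | _, _, .cons (u := a) (v := c) _ p => signedEdge G a c + walkFlow p

lemma walkFlow_apply_eq_zero {a b : V} (p : G.Walk a b) {e : G.edgeSet}
    (he : (e : Sym2 V) ∉ p.edges) : walkFlow G p e = 0 := by
  induction p with
  | nil => rfl
  | cons h p ih =>
    rw [Walk.edges_cons, List.mem_cons, not_or] at he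
    simp [walkFlow, ih he.2, signedEdge, he.1]

variable [Fintype V] [DecidableRel G.Adj]

lemma incMat_mulVec_signedEdge {a b : V} (h : G.Adj a b) :
    incMat G *ᵥ signedEdge G a b = Pi.single b 1 - Pi.single a 1 := by
  funext w
  have hab : s(a, b) ∈ G.edgeSet := h
  have hsum : (incMat G *ᵥ signedEdge G a b) w
      = incMat G w ⟨s(a, b), hab⟩ * signedEdge G a b ⟨s(a, b), hab⟩ := by
    refine Finset.sum_eq_single _ (fun e _ hne => ?_) (by simp)
    have hne' : (e : Sym2 V) ≠ s(a, b) := fun h => hne (Subtype.ext h)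
    simp [signedEdge, hne']
  have hinc : incMat G w ⟨s(a, b), hab⟩
      = (if w = a ⊔ b then 1 else 0) - (if w = a ⊓ b then 1 else 0) := rfl
  rw [hsum, hinc, signedEdge, if_pos rfl]
  simp only [Pi.sub_apply, Pi.single_apply]
  rcases le_or_gt a b with hle | hlt
  · rw [sup_eq_right.mpr hle, inf_eq_left.mpr hle, if_pos hle]; ring
  · rw [sup_eq_left.mpr hlt.le, inf_eq_right.mpr hlt.le, if_neg (not_le.mpr hlt)]; ring

lemma incMat_mulVec_walkFlow {a b : V} (p : G.Walk a b) :
    incMat G *ᵥ walkFlow G p = Pi.single b 1 - Pi.single a 1 := by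
  induction p with
  | nil => simp [walkFlow]
  | cons h p ih =>
    rw [walkFlow, Matrix.mulVec_add, ih, incMat_mulVec_signedEdge G h]
    abel

lemma walkFlow_mem_cycleSpace {a : V} (p : G.Walk a a) : walkFlow G p ∈ cycleSpace G := by
  rw [cycleSpace, LinearMap.mem_ker, Matrix.mulVecLin_apply, incMat_mulVec_walkFlow, sub_self]

lemma exists_mem_cycleSpace_apply_ne_zero {Y : SimpleGraph V} (hYG : Y ≤ G)
    (hY : Y.Connected) {σ : G.edgeSet} (hσ : (σ : Sym2 V) ∉ Y.edgeSet) :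
    ∃ z ∈ cycleSpace G, z σ ≠ 0 := by
  obtain ⟨⟨u, v⟩, huv⟩ := Quot.exists_rep (σ : Sym2 V)
  have hσuv : (σ : Sym2 V) = s(u, v) := huv.symm
  have hadj : G.Adj u v := G.mem_edgeSet.mp (hσuv ▸ σ.2)
  obtain ⟨p⟩ := hY.preconnected v u
  refine ⟨walkFlow G (.cons hadj (p.mapLe hYG)), walkFlow_mem_cycleSpace G _, ?_⟩
  have hp : walkFlow G (p.mapLe hYG) σ = 0 := by
    refine walkFlow_apply_eq_zero G _ fun hmem => hσ ?_
    rw [Walk.edges_mapLe_eq_edges] at hmem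
    exact p.edges_subset_edgeSet hmem
  simp only [walkFlow, Pi.add_apply, hp, add_zero, signedEdge, hσuv, if_true]
  split_ifs <;> norm_num

end CycleSpace

section Winding

variable {V : Type} [Fintype V] [LinearOrder V] (G : SimpleGraph V) [DecidableRel G.Adj]
  {n : ℕ} (β : Module.Basis (Fin (n + 1)) ℤ (cycleSpace G)) (D : Matrix G.edgeSet (Fin n) ℤ)
  (hD : ∀ j, (fun e => D e j) ∈ cycleSpace G)

lemma winding_eq_det {z : G.edgeSet → ℤ} (hz : z ∈ cycleSpace G) :
    winding G β D hD z =
      β.det (Fin.cons (α := fun _ => cycleSpace G) ⟨z, hz⟩ fun k => ⟨fun e => D e k, hD k⟩) := by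
  rw [winding, dif_pos hz, β.det_apply]
  rfl

lemma winding_eq_zero_of_apply_eq_zero {σ : G.edgeSet} (hσ : ∃ z ∈ cycleSpace G, z σ ≠ 0)
    (hDσ : ∀ j, D σ j = 0) {z : G.edgeSet → ℤ} (hz : z ∈ cycleSpace G) (hzσ : z σ = 0) :
    winding G β D hD z = 0 := by
  obtain ⟨z₀, hz₀, hz₀σ⟩ := hσ
  let evalσ : cycleSpace G →ₗ[ℤ] ℤ := (LinearMap.proj σ).comp (cycleSpace G).subtype
  have hevalσ : evalσ ≠ 0 := fun h => hz₀σ (LinearMap.congr_fun h ⟨z₀, hz₀⟩)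
  rw [winding_eq_det G β D hD hz]
  exact β.det_eq_zero_of_forall_apply_eq_zero hevalσ fun j => Fin.cases hzσ hDσ j

end Winding

theorem lambda_minus_sigma_eq_zero_general {V : Type} [Fintype V] [LinearOrder V]
    (G : SimpleGraph V) [DecidableRel G.Adj] {n : ℕ}
    (β : Module.Basis (Fin (n + 1)) ℤ (cycleSpace G))
    (D : Matrix G.edgeSet (Fin n) ℤ)
    (hD : ∀ j, (fun e => D e j) ∈ cycleSpace G)
    (zY : SimpleGraph V → (G.edgeSet → ℤ)) (hzY : IsCycleVectorChoice G zY)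
    (σ : G.edgeSet) (hσ : ∀ j, D σ j = 0) :
    ∑ᶠ Y ∈ {Y : SimpleGraph V | IsCycletree G Y ∧ (σ : Sym2 V) ∉ Y.edgeSet},
      winding G β D hD (zY Y) • zY Y = (0 : G.edgeSet → ℤ) := by
  refine finsum_mem_of_eqOn_zero fun Y ⟨hY, hYσ⟩ => ?_
  obtain ⟨hzYmem, -, -, hzYsupp⟩ := hzY Y hY
  have hzYσ : zY Y σ = 0 := not_not.mp fun h => hYσ (hzYsupp σ h)
  have hcycle := exists_mem_cycleSpace_apply_ne_zero G hY.1 hY.2.1 hYσ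
  simp [winding_eq_zero_of_apply_eq_zero G β D hD hcycle hσ hzYmem hzYσ]

/-- If the row of the unicyclizer `∂` indexed by an edge `σ` of `G`
is zero, then `λ_{−σ} = Σ_{Y cycletree, σ ∉ E(Y)} w(z_Y)·z_Y = 0`: the part of the
standard harmonic cycle coming from cycletrees not containing `σ` vanishes. -/
theorem lambda_minus_sigma_eq_zero {V : Type} [Fintype V] [LinearOrder V]
    (G : SimpleGraph V) [DecidableRel G.Adj] (hG : G.Connected) {n : ℕ}
    (β : Module.Basis (Fin (n + 1)) ℤ (cycleSpace G))
    (D : Matrix G.edgeSet (Fin n) ℤ)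
    (hD : ∀ j, (fun e => D e j) ∈ cycleSpace G)
    (hDli : LinearIndependent ℤ (fun j : Fin n => fun e => D e j))
    (zY : SimpleGraph V → (G.edgeSet → ℤ)) (hzY : IsCycleVectorChoice G zY)
    (σ : G.edgeSet) (hσ : ∀ j, D σ j = 0) :
    ∑ᶠ Y ∈ {Y : SimpleGraph V | IsCycletree G Y ∧ (σ : Sym2 V) ∉ Y.edgeSet},
      winding G β D hD (zY Y) • zY Y = (0 : G.edgeSet → ℤ) :=
  lambda_minus_sigma_eq_zero_general G β D hD zY hzY σ hσ
end

section
/- Let σ be an edge of G that is not a bridge (i.e., deleting σ leaves G connected), and suppose the row of the unicyclizer ∂ indexed by σ is the zero vector. Then every z ∈ Z₁(G) whose coordinate at σ is 0 satisfies w(z) = 0. -/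
open Matrix

/-!
Evaluation at `σ` is a linear functional on `Z₁(G)`, and it is nonzero: since `σ` is not a
bridge, it closes a walk of `G - σ` into a closed walk whose chain has `σ`-coordinate `±1`.
The columns of `[z, ∂]_β` are coordinate vectors of elements of its kernel, so the nonzero
row vector `(β_i(σ))_i` annihilates that matrix, and its determinant vanishes.
-/

namespace SimpleGraph

variable {V : Type} [LinearOrder V] (G : SimpleGraph V)

def edgeSign (a b : V) : ℤ := if a < b then 1 else -1

def walkChain : ∀ {a b : V}, G.Walk a b → G.edgeSet → ℤ
  | _, _, .nil => 0
  | a, _, @Walk.cons _ _ _ b _ h p => Pi.single ⟨s(a, b), h⟩ (edgeSign a b) + walkChain p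

variable {G}

theorem walkChain_apply_of_notMem_edges {a b : V} (p : G.Walk a b) {e : G.edgeSet}
    (he : (e : Sym2 V) ∉ p.edges) : walkChain G p e = 0 := by
  induction p with
  | nil => rfl
  | cons h p ih =>
    simp only [Walk.edges_cons, List.mem_cons, not_or] at he
    rw [walkChain, Pi.add_apply, ih he.2, Pi.single_apply,
      if_neg fun h' => he.1 (congrArg Subtype.val h'), add_zero]

variable [Fintype V] [DecidableRel G.Adj]

theorem mem_cycleSpace {z : G.edgeSet → ℤ} : z ∈ cycleSpace G ↔ incMat G *ᵥ z = 0 :=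
  LinearMap.mem_ker

theorem col_incMat {a b : V} (h : G.Adj a b) :
    (incMat G).col ⟨s(a, b), h⟩ = Pi.single (a ⊔ b) 1 - Pi.single (a ⊓ b) 1 := by
  ext w
  simp [incMat, Pi.single_apply]

theorem incMat_mulVec_single {a b : V} (h : G.Adj a b) :
    incMat G *ᵥ Pi.single ⟨s(a, b), h⟩ (edgeSign a b) = Pi.single b 1 - Pi.single a 1 := by
  rw [mulVec_single, col_incMat, edgeSign]
  rcases h.ne.lt_or_gt with hab | hab
  · rw [if_pos hab, sup_eq_right.2 hab.le, inf_eq_left.2 hab.le, MulOpposite.op_one, one_smul]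
  · rw [if_neg hab.not_gt, sup_eq_left.2 hab.le, inf_eq_right.2 hab.le, MulOpposite.op_neg,
      MulOpposite.op_one, neg_one_smul, neg_sub]

theorem incMat_mulVec_walkChain {a b : V} (p : G.Walk a b) :
    incMat G *ᵥ walkChain G p = Pi.single b 1 - Pi.single a 1 := by
  induction p with
  | nil => simp [walkChain]
  | cons h p ih =>
    rw [walkChain, mulVec_add, incMat_mulVec_single h, ih]
    abel

theorem walkChain_mem_cycleSpace {a : V} (p : G.Walk a a) : walkChain G p ∈ cycleSpace G := by
  rw [mem_cycleSpace, incMat_mulVec_walkChain, sub_self]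

theorem exists_mem_cycleSpace_apply_ne_zero (σ : G.edgeSet)
    (hσ : (G.deleteEdges {(σ : Sym2 V)}).Connected) :
    ∃ z ∈ cycleSpace G, z σ ≠ 0 := by
  obtain ⟨e, he⟩ := σ
  induction e using Sym2.inductionOn with
  | hf u v =>
  obtain ⟨q⟩ := hσ.preconnected v u
  have hq : ∀ e ∈ q.edges, e ∈ G.edgeSet ∧ e ≠ s(u, v) := fun e he' => by
    simpa using q.edges_subset_edgeSet he'
  refine ⟨walkChain G (.cons he (q.transfer G fun e he' => (hq e he').1)),
    walkChain_mem_cycleSpace _, ?_⟩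
  simp only [walkChain]
  rw [Pi.add_apply, walkChain_apply_of_notMem_edges, Pi.single_eq_same, add_zero]
  · unfold edgeSign; split_ifs <;> decide
  · rw [Walk.edges_transfer]
    exact fun h => (hq _ h).2 rfl

end SimpleGraph

theorem Module.Basis.det_eq_zero_of_map_eq_zero {R M ι : Type*} [CommRing R] [IsDomain R]
    [AddCommGroup M] [Module R M] [Fintype ι] [DecidableEq ι] (b : Module.Basis ι R M)
    {f : M →ₗ[R] R} (hf : f ≠ 0) {v : ι → M} (hv : ∀ j, f (v j) = 0) : b.det v = 0 := by
  rw [b.det_apply, ← exists_vecMul_eq_zero_iff]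
  refine ⟨fun i => f (b i), fun h => hf (b.ext fun i => congrFun h i), funext fun j => ?_⟩
  have hsum := congrArg f (b.sum_repr (v j))
  simp only [map_sum, map_smul, smul_eq_mul] at hsum
  simp only [vecMul, dotProduct, toMatrix_apply, Pi.zero_apply, mul_comm (f (b _)), hsum, hv]

theorem winding_eq_zero_of_zero_row_general {V : Type} [Fintype V] [LinearOrder V]
    (G : SimpleGraph V) [DecidableRel G.Adj] {n : ℕ}
    (β : Module.Basis (Fin (n + 1)) ℤ (cycleSpace G))
    (D : Matrix G.edgeSet (Fin n) ℤ)
    (hD : ∀ j, (fun e => D e j) ∈ cycleSpace G)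
    (σ : G.edgeSet)
    (hnb : (G.deleteEdges {(σ : Sym2 V)}).Connected)
    (hσ : ∀ j, D σ j = 0) :
    ∀ z ∈ cycleSpace G, z σ = 0 → winding G β D hD z = 0 := by
  intro z hz hzσ
  obtain ⟨c, hc, hcσ⟩ := G.exists_mem_cycleSpace_apply_ne_zero σ hnb
  let evalσ : cycleSpace G →ₗ[ℤ] ℤ := (LinearMap.proj σ).comp (cycleSpace G).subtype
  have hevalσ : evalσ ≠ 0 := fun h => hcσ (LinearMap.congr_fun h ⟨c, hc⟩)
  rw [winding, dif_pos hz]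
  refine (β.det_apply _).symm.trans (β.det_eq_zero_of_map_eq_zero hevalσ fun j => ?_)
  cases j using Fin.cases <;> simp [evalσ, hzσ, hσ]

/-- Let `σ` be an edge of `G` that is not a bridge (deleting `σ`
leaves `G` connected), and suppose the row of the unicyclizer `∂` indexed by `σ` is
zero. Then every `z ∈ Z₁(G)` whose coordinate at `σ` is `0` has winding number
`w(z) = 0`. -/
theorem winding_eq_zero_of_zero_row {V : Type} [Fintype V] [LinearOrder V]
    (G : SimpleGraph V) [DecidableRel G.Adj] (hG : G.Connected) {n : ℕ}
    (β : Module.Basis (Fin (n + 1)) ℤ (cycleSpace G))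
    (D : Matrix G.edgeSet (Fin n) ℤ)
    (hD : ∀ j, (fun e => D e j) ∈ cycleSpace G)
    (hDli : LinearIndependent ℤ (fun j : Fin n => fun e => D e j))
    (σ : G.edgeSet)
    (hnb : (G.deleteEdges {(σ : Sym2 V)}).Connected)
    (hσ : ∀ j, D σ j = 0) :
    ∀ z ∈ cycleSpace G, z σ = 0 → winding G β D hD z = 0 :=
  winding_eq_zero_of_zero_row_general G β D hD σ hnb hσ
end
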